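/- Let β be a real number with β ≥ e³ + e⁻¹, and let p ∈ H₁. If the function z ↦ p(z)³ + β·z·p(z)·p′(z) is subordinate to z ↦ e^z on 𝔻, then p is subordinate to z ↦ e^z on 𝔻. -/

import Mathlib

/-! If `p` leaves `exp 𝔻`, let `z₀` be a point of least modulus where it does. Then `q = log p`
satisfies `‖q‖ ≤ 1 = ‖q z₀‖` on `‖z‖ ≤ ‖z₀‖`, so Jack's lemma gives `‖z₀ q'(z₀)‖ ≥ 1`. With
`p z₀ = exp ζ` and `t = Re ζ ∈ [-1, 1]`, this makes
`‖p³ + β z p p'‖ = ‖p³ + β p² · z₀ q'(z₀)‖ ≥ β e^{2t} - e^{3t}` at `z₀`, which is at least `e`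
because `β ≥ e³ + e⁻¹` is the maximum of the convex function `e^t + e^{1-2t}` on `[-1, 1]`.
But `exp 𝔻` lies in the disk of radius `e`. -/

open Complex

noncomputable section

/-- The open unit disk in the complex plane. -/
def unitDisk : Set ℂ := Metric.ball 0 1

/-- `f` is subordinate to `g` on the open unit disk: there is an analytic
Schwarz function `w` with `w 0 = 0`, `‖w z‖ < 1` on the disk, and `f = g ∘ w`. -/
def Subord (f g : ℂ → ℂ) : Prop :=
  ∃ w : ℂ → ℂ, DifferentiableOn ℂ w unitDisk ∧ w 0 = 0 ∧
    (∀ z ∈ unitDisk, ‖w z‖ < 1) ∧ ∀ z ∈ unitDisk, f z = g (w z)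

open Metric Set Filter Topology

theorem Real.exp_add_exp_one_sub_two_mul_le {t : ℝ} (ht : t ∈ Icc (-1) 1) :
    Real.exp t + Real.exp (1 - 2 * t) ≤ Real.exp 3 + Real.exp (-1) := by
  have chord : ∀ a b θ : ℝ, θ ∈ Icc (0 : ℝ) 1 →
      Real.exp ((1 - θ) * a + θ * b) ≤ (1 - θ) * Real.exp a + θ * Real.exp b :=
    fun a b θ hθ => convexOn_exp.2 trivial trivial (by linarith [hθ.2]) hθ.1 (by ring)
  obtain ⟨ht₁, ht₂⟩ := ht
  have h₁ := chord (-1) 1 ((1 + t) / 2) ⟨by linarith, by linarith⟩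
  have h₂ := chord (-1) 3 ((1 - t) / 2) ⟨by linarith, by linarith⟩
  rw [show (1 - (1 + t) / 2) * -1 + (1 + t) / 2 * 1 = t by ring] at h₁
  rw [show (1 - (1 - t) / 2) * -1 + (1 - t) / 2 * 3 = 1 - 2 * t by ring] at h₂
  nlinarith [Real.exp_le_exp.2 (show (1 : ℝ) ≤ 3 by norm_num)]

theorem Real.exp_one_le_mul_exp_sub_exp {β t : ℝ} (hβ : Real.exp 3 + Real.exp (-1) ≤ β)
    (ht : t ∈ Icc (-1) 1) :
    Real.exp 1 ≤ β * Real.exp (2 * t) - Real.exp (3 * t) := by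
  have h := Real.exp_add_exp_one_sub_two_mul_le ht
  have h3 : Real.exp (3 * t) = Real.exp t * Real.exp (2 * t) := by
    rw [← Real.exp_add]; ring_nf
  have h1 : Real.exp 1 = Real.exp (1 - 2 * t) * Real.exp (2 * t) := by
    rw [← Real.exp_add]; ring_nf
  rw [h3, h1]
  nlinarith [Real.exp_pos (2 * t)]

theorem Complex.exp_one_le_norm_exp_pow_three_add_mul {β : ℝ}
    (hβ : Real.exp 3 + Real.exp (-1) ≤ β) {ζ c : ℂ} (hζ : ‖ζ‖ ≤ 1) (hc : 1 ≤ ‖c‖) :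
    Real.exp 1 ≤ ‖exp ζ ^ 3 + β * exp ζ ^ 2 * c‖ := by
  have hβ₀ : 0 < β := by linarith [Real.exp_pos 3, Real.exp_pos (-1)]
  have ht : ζ.re ∈ Icc (-1) 1 := abs_le.1 ((abs_re_le_norm ζ).trans hζ)
  have hcube : ‖exp ζ ^ 3‖ = Real.exp (3 * ζ.re) := by
    rw [norm_pow, norm_exp, ← Real.exp_nat_mul]; norm_num
  have hsq : β * Real.exp (2 * ζ.re) ≤ ‖(β : ℂ) * exp ζ ^ 2 * c‖ := by
    rw [norm_mul, norm_mul, norm_pow, norm_exp, ← Real.exp_nat_mul, norm_real,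
      Real.norm_of_nonneg hβ₀.le]
    push_cast
    exact le_mul_of_one_le_right (by positivity) hc
  calc Real.exp 1 ≤ β * Real.exp (2 * ζ.re) - Real.exp (3 * ζ.re) :=
        Real.exp_one_le_mul_exp_sub_exp hβ ht
    _ ≤ ‖(β : ℂ) * exp ζ ^ 2 * c‖ - ‖exp ζ ^ 3‖ := by rw [hcube]; linarith
    _ ≤ ‖exp ζ ^ 3 + β * exp ζ ^ 2 * c‖ := by
      rw [add_comm]; exact norm_sub_le_norm_add _ _

theorem Complex.abs_im_lt_pi_of_norm_le_one {ζ : ℂ} (hζ : ‖ζ‖ ≤ 1) : |ζ.im| < Real.pi :=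
  (abs_im_le_norm ζ).trans_lt (hζ.trans_lt (by linarith [Real.pi_gt_three]))

theorem Complex.exp_mem_slitPlane_of_abs_im_lt {ζ : ℂ} (hζ : |ζ.im| < Real.pi) :
    exp ζ ∈ slitPlane := by
  obtain ⟨h₁, h₂⟩ := abs_lt.1 hζ
  rw [exp_mem_slitPlane, (toIocMod_eq_self _).2 ⟨h₁, by linarith⟩]
  exact h₂.ne

theorem Complex.log_exp_of_abs_im_lt {ζ : ℂ} (hζ : |ζ.im| < Real.pi) : log (exp ζ) = ζ :=
  log_exp (abs_lt.1 hζ).1 (abs_lt.1 hζ).2.le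

theorem exists_norm_minimal_mem_frontier {X Y : Type*} [NormedAddCommGroup X] [NormedSpace ℝ X]
    [ProperSpace X] [TopologicalSpace Y] {f : X → Y} {R : ℝ} {E : Set Y}
    (hf : ContinuousOn f (ball 0 R)) (hE : IsOpen E) (h₀ : f 0 ∈ E)
    (hfE : ¬ MapsTo f (ball 0 R) E) :
    ∃ z₀ ∈ ball 0 R, f z₀ ∈ frontier E ∧ MapsTo f (ball 0 ‖z₀‖) E := by
  obtain ⟨z, hz, hzE⟩ := not_forall₂.mp hfE
  set K := closedBall 0 ‖z‖ \ (ball 0 R ∩ f ⁻¹' E)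
  have hK : IsCompact K :=
    (isCompact_closedBall 0 ‖z‖).diff (hf.isOpen_inter_preimage isOpen_ball hE)
  obtain ⟨z₀, ⟨hz₀z, hz₀⟩, hmin⟩ := hK.exists_isMinOn
    ⟨z, mem_closedBall_zero_iff.2 le_rfl, fun h => hzE h.2⟩ continuous_norm.continuousOn
  have hz₀R : z₀ ∈ ball 0 R :=
    mem_ball_zero_iff.2 ((mem_closedBall_zero_iff.1 hz₀z).trans_lt (mem_ball_zero_iff.1 hz))
  have hz₀E : f z₀ ∉ E := fun h => hz₀ ⟨hz₀R, h⟩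
  have hball : MapsTo f (ball 0 ‖z₀‖) E := by
    intro y hy
    by_contra hyE
    have hy' : ‖y‖ < ‖z₀‖ := mem_ball_zero_iff.1 hy
    have hyK : y ∈ K := ⟨mem_closedBall_zero_iff.2 (hy'.le.trans (mem_closedBall_zero_iff.1 hz₀z)),
      fun h => hyE h.2⟩
    exact (hmin hyK).not_gt hy'
  have hz₀0 : z₀ ≠ 0 := by
    rintro rfl
    exact hz₀E h₀
  have hz₀cl : z₀ ∈ closure (ball 0 ‖z₀‖) := by
    rw [closure_ball _ (norm_ne_zero_iff.2 hz₀0)]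
    exact mem_closedBall_zero_iff.2 le_rfl
  have hcl : f z₀ ∈ closure E := closure_mono hball.image_subset
    (((hf z₀ hz₀R).continuousAt (isOpen_ball.mem_nhds hz₀R)).continuousWithinAt.mem_closure_image
      hz₀cl)
  exact ⟨z₀, hz₀R, hE.frontier_eq ▸ ⟨hcl, hz₀E⟩, hball⟩

/-- Jack's lemma, in the form `‖f z₀‖ ≤ ‖z₀ f'(z₀)‖`. -/
theorem norm_le_norm_mul_deriv_of_mapsTo_ball {f : ℂ → ℂ} {z₀ : ℂ}
    (hd : DifferentiableOn ℂ f (ball 0 ‖z₀‖)) (hz₀ : DifferentiableAt ℂ f z₀) (h₀ : f 0 = 0)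
    (hmaps : MapsTo f (ball 0 ‖z₀‖) (closedBall 0 ‖f z₀‖)) :
    ‖f z₀‖ ≤ ‖z₀ * deriv f z₀‖ := by
  rcases eq_or_ne z₀ 0 with rfl | hne
  · simp [h₀]
  set φ : ℝ → ℂ := fun t => f (z₀ * t)
  have hφ : HasDerivAt φ (z₀ * deriv f z₀) 1 := by
    have : HasDerivAt (fun s : ℂ => f (z₀ * s)) (deriv f z₀ * (z₀ * 1)) ((1 : ℝ) : ℂ) :=
      .comp_of_eq _ hz₀.hasDerivAt ((hasDerivAt_id _).const_mul z₀) (by simp)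
    simpa [mul_comm] using this.comp_ofReal
  have hslope : ∀ t ∈ Ioo (0 : ℝ) 1, ‖f z₀‖ ≤ ‖slope φ 1 t‖ := by
    intro t ⟨ht₀, ht₁⟩
    have hschwarz : ‖φ t‖ ≤ ‖f z₀‖ * t := by
      have := dist_le_div_mul_dist_of_mapsTo_ball hd (by rwa [h₀])
        (z := z₀ * t) (by simpa [norm_mul, abs_of_pos ht₀, norm_pos_iff.2 hne] using ht₁)
      simp only [dist_zero_right, h₀, norm_mul, Complex.norm_real, Real.norm_eq_abs,
        abs_of_pos ht₀] at this
      rwa [div_mul_eq_mul_div, mul_div_assoc, mul_div_cancel_left₀ _ (norm_ne_zero_iff.2 hne)]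
        at this
    have hφ1 : φ 1 = f z₀ := by simp [φ]
    rw [slope_def_module, norm_smul, norm_inv, Real.norm_eq_abs, abs_of_neg (by linarith),
      neg_sub, hφ1, le_inv_mul_iff₀ (by linarith)]
    calc (1 - t) * ‖f z₀‖ ≤ ‖f z₀‖ - ‖φ t‖ := by linarith
      _ ≤ ‖φ t - f z₀‖ := by rw [norm_sub_rev]; exact norm_sub_norm_le _ _
  have hlim : Tendsto (slope φ 1) (𝓝[<] 1) (𝓝 (z₀ * deriv f z₀)) :=
    (hasDerivAt_iff_tendsto_slope.1 hφ).mono_left (nhdsLT_le_nhdsNE 1)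
  exact ge_of_tendsto hlim.norm (eventually_of_mem (Ioo_mem_nhdsLT zero_lt_one) hslope)

theorem Complex.exp_image_ball_zero_one :
    exp '' ball (0 : ℂ) 1 = slitPlane ∩ log ⁻¹' ball 0 1 := by
  ext v
  constructor
  · rintro ⟨ζ, hζ, rfl⟩
    have hζπ := abs_im_lt_pi_of_norm_le_one (mem_ball_zero_iff.1 hζ).le
    exact ⟨exp_mem_slitPlane_of_abs_im_lt hζπ, by rwa [mem_preimage, log_exp_of_abs_im_lt hζπ]⟩
  · rintro ⟨hslit, hlog⟩
    exact ⟨log v, hlog, exp_log (slitPlane_ne_zero hslit)⟩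

theorem Complex.closure_exp_image_ball_subset :
    closure (exp '' ball (0 : ℂ) 1) ⊆ exp '' closedBall 0 1 :=
  closure_minimal (image_mono ball_subset_closedBall)
    ((isCompact_closedBall 0 1).image continuous_exp).isClosed

theorem subord_exp_of_mapsTo {p : ℂ → ℂ} (hp : DifferentiableOn ℂ p unitDisk) (hp0 : p 0 = 1)
    (hmaps : MapsTo p unitDisk (exp '' ball 0 1)) : Subord p exp := by
  rw [exp_image_ball_zero_one] at hmaps
  refine ⟨fun z => log (p z), fun z hz => ?_, by simp [hp0], fun z hz => ?_, fun z hz => ?_⟩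
  · exact ((hp.differentiableAt (isOpen_ball.mem_nhds hz)).clog
      (hmaps hz).1).differentiableWithinAt
  · exact mem_ball_zero_iff.1 (hmaps hz).2
  · exact (exp_log (slitPlane_ne_zero (hmaps hz).1)).symm

theorem exists_jack_point_of_not_mapsTo_exp_ball {p : ℂ → ℂ} (hp : DifferentiableOn ℂ p unitDisk)
    (hp0 : p 0 = 1) (hmaps : ¬ MapsTo p unitDisk (exp '' ball 0 1)) :
    ∃ z₀ ∈ unitDisk, ∃ ζ : ℂ, ‖ζ‖ = 1 ∧ p z₀ = exp ζ ∧ 1 ≤ ‖z₀ * deriv p z₀ / p z₀‖ := by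
  have hE : IsOpen (exp '' ball (0 : ℂ) 1) := isOpenMap_exp _ isOpen_ball
  obtain ⟨z₀, hz₀, hfr, hball⟩ := exists_norm_minimal_mem_frontier hp.continuousOn hE
    ⟨0, mem_ball_self one_pos, by rw [exp_zero, hp0]⟩ hmaps
  rw [hE.frontier_eq] at hfr
  obtain ⟨ζ, hζ, hpζ⟩ := closure_exp_image_ball_subset hfr.1
  have hζ1 : ‖ζ‖ = 1 := le_antisymm (mem_closedBall_zero_iff.1 hζ)
    (not_lt.1 fun h => hfr.2 ⟨ζ, mem_ball_zero_iff.2 h, hpζ⟩)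
  have hζπ := abs_im_lt_pi_of_norm_le_one hζ1.le
  have hslit : p z₀ ∈ slitPlane := hpζ ▸ exp_mem_slitPlane_of_abs_im_lt hζπ
  have hlogz₀ : log (p z₀) = ζ := by rw [← hpζ, log_exp_of_abs_im_lt hζπ]
  rw [exp_image_ball_zero_one] at hball
  have hpd : ∀ z ∈ unitDisk, DifferentiableAt ℂ p z :=
    fun z hz => hp.differentiableAt (isOpen_ball.mem_nhds hz)
  have hsub : ball (0 : ℂ) ‖z₀‖ ⊆ unitDisk := ball_subset_ball (mem_ball_zero_iff.1 hz₀).le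
  have hjack := norm_le_norm_mul_deriv_of_mapsTo_ball (f := fun z => log (p z))
    (fun z hz => ((hpd z (hsub hz)).clog (hball hz).1).differentiableWithinAt)
    ((hpd z₀ hz₀).clog hslit) (by simp [hp0])
    (fun z hz => by
      rw [mem_closedBall_zero_iff, hlogz₀, hζ1]
      exact (mem_ball_zero_iff.1 (hball hz).2).le)
  rw [((hpd z₀ hz₀).hasDerivAt.clog hslit).deriv, hlogz₀, hζ1, ← mul_div_assoc] at hjack
  exact ⟨z₀, hz₀, ζ, hζ1, hpζ.symm, hjack⟩

theorem stmt_18 (β : ℝ) (hβ : Real.exp 1 ^ 3 + (Real.exp 1)⁻¹ ≤ β)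
    (p : ℂ → ℂ) (hp : DifferentiableOn ℂ p unitDisk) (hp0 : p 0 = 1)
    (hsub : Subord (fun z => (p z) ^ 3 + (β : ℂ) * z * p z * deriv p z)
      Complex.exp) :
    Subord p Complex.exp := by
  rw [Real.exp_one_pow, Nat.cast_ofNat, ← Real.exp_neg] at hβ
  refine subord_exp_of_mapsTo hp hp0 (not_not.1 fun hmaps => ?_)
  obtain ⟨z₀, hz₀, ζ, hζ, hpz₀, hjack⟩ := exists_jack_point_of_not_mapsTo_exp_ball hp hp0 hmaps
  obtain ⟨w, -, -, hw, hpw⟩ := hsub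
  have hlt : ‖exp (w z₀)‖ < Real.exp 1 := by
    rw [norm_exp]
    exact Real.exp_lt_exp.2 ((re_le_norm _).trans_lt (hw z₀ hz₀))
  have hge := exp_one_le_norm_exp_pow_three_add_mul hβ hζ.le hjack
  have hexpr : p z₀ ^ 3 + β * z₀ * p z₀ * deriv p z₀ =
      exp ζ ^ 3 + β * exp ζ ^ 2 * (z₀ * deriv p z₀ / p z₀) := by
    rw [hpz₀]
    field_simp [exp_ne_zero ζ]
  have hpw₀ : p z₀ ^ 3 + β * z₀ * p z₀ * deriv p z₀ = exp (w z₀) := hpw z₀ hz₀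
  rw [← hexpr, hpw₀] at hge
  exact hlt.not_ge hge
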